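/- arXiv:2101.03639 — 2 statements merged into one kernel-verified Lean document; each statement's English description precedes it below -/
import Mathlib

section
/- Along any solution c of the Kepler-Heisenberg system, the dilational momentum J = x·p_x + y·p_y + 2z·p_z satisfies dJ/dt = 2H₀ at every time, where H₀ = H(c(t)) is the (constant) energy of the solution. -/
/-- `P_X = p_x - (1/2) y p_z`, where phase space coordinates are
`(x, y, z, p_x, p_y, p_z) = (p 0, p 1, p 2, p 3, p 4, p 5)`. -/
noncomputable def PX (p : Fin 6 → ℝ) : ℝ := p 3 - (1/2) * p 1 * p 5

/-- `P_Y = p_y + (1/2) x p_z`. -/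
noncomputable def PY (p : Fin 6 → ℝ) : ℝ := p 4 + (1/2) * p 0 * p 5

/-- `Q = (x² + y²)² + 16 z²`. -/
noncomputable def Qf (p : Fin 6 → ℝ) : ℝ := ((p 0)^2 + (p 1)^2)^2 + 16 * (p 2)^2

/-- The Kepler–Heisenberg Hamiltonian `H = (1/2)(P_X² + P_Y²) - (1/(8π)) Q^{-1/2}`. -/
noncomputable def Ham (p : Fin 6 → ℝ) : ℝ :=
  (1/2) * ((PX p)^2 + (PY p)^2) - (1/(8*Real.pi)) * (Qf p) ^ (-(1/2) : ℝ)

/-- A solution of the Kepler–Heisenberg system: a differentiable curve on an open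
interval (open preconnected set) `I`, whose position component never vanishes, and
which satisfies Hamilton's equations for `Ham`. -/
def IsSolutionOn (c : ℝ → Fin 6 → ℝ) (I : Set ℝ) : Prop :=
  IsOpen I ∧ IsPreconnected I ∧
  ∀ t ∈ I,
    (¬ (c t 0 = 0 ∧ c t 1 = 0 ∧ c t 2 = 0)) ∧
    HasDerivAt (fun τ => c τ 0) (fderiv ℝ Ham (c t) (Pi.single 3 1)) t ∧
    HasDerivAt (fun τ => c τ 1) (fderiv ℝ Ham (c t) (Pi.single 4 1)) t ∧
    HasDerivAt (fun τ => c τ 2) (fderiv ℝ Ham (c t) (Pi.single 5 1)) t ∧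
    HasDerivAt (fun τ => c τ 3) (-(fderiv ℝ Ham (c t) (Pi.single 0 1))) t ∧
    HasDerivAt (fun τ => c τ 4) (-(fderiv ℝ Ham (c t) (Pi.single 1 1))) t ∧
    HasDerivAt (fun τ => c τ 5) (-(fderiv ℝ Ham (c t) (Pi.single 2 1))) t

/-- The dilational momentum `J = x p_x + y p_y + 2 z p_z`. -/
noncomputable def Jmom (p : Fin 6 → ℝ) : ℝ := p 0 * p 3 + p 1 * p 4 + 2 * p 2 * p 5

/-!
The dilational momentum `J` generates the weighted dilations
`(x, y, z, p_x, p_y, p_z) ↦ (λx, λy, λ²z, λ⁻¹p_x, λ⁻¹p_y, λ⁻²p_z)`, and `H` is homogeneous of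
degree `-2` under them. Hence along a solution `dJ/dt = {J, H} = -dH(X)`, where `X` is the
infinitesimal generator of the dilations, and Euler's identity for homogeneous functions gives
`dH(X) = -2H`.
-/

open Real

theorem fderiv_apply_eq_mul_of_exp_homogeneous {E : Type*} [NormedAddCommGroup E]
    [NormedSpace ℝ E] {f : E → ℝ} {γ : ℝ → E} {v : E} {k : ℝ}
    (hf : DifferentiableAt ℝ f (γ 0)) (hγ : HasDerivAt γ v 0)
    (hfγ : ∀ s, f (γ s) = exp (k * s) * f (γ 0)) :
    fderiv ℝ f (γ 0) v = k * f (γ 0) := by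
  have hcomp : HasDerivAt (f ∘ γ) (fderiv ℝ f (γ 0) v) 0 :=
    hf.hasFDerivAt.comp_hasDerivAt 0 hγ
  have hexp : HasDerivAt (fun s => exp (k * s) * f (γ 0)) (k * f (γ 0)) 0 := by
    simpa using (((hasDerivAt_id 0).const_mul k).exp.mul_const (f (γ 0)))
  rw [show f ∘ γ = _ from funext hfγ] at hcomp
  exact hcomp.unique hexp

def dilationWeight : Fin 6 → ℝ := ![1, 1, 2, -1, -1, -2]

noncomputable def dilation (s : ℝ) (p : Fin 6 → ℝ) : Fin 6 → ℝ :=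
  fun i => exp (dilationWeight i * s) * p i

def dilationGenerator (p : Fin 6 → ℝ) : Fin 6 → ℝ := fun i => dilationWeight i * p i

theorem dilation_zero (p : Fin 6 → ℝ) : dilation 0 p = p := by
  ext i; simp [dilation]

theorem hasDerivAt_dilation (p : Fin 6 → ℝ) :
    HasDerivAt (fun s => dilation s p) (dilationGenerator p) 0 := by
  refine hasDerivAt_pi.2 fun i => ?_
  simpa [dilation, dilationGenerator] using
    (((hasDerivAt_id (0 : ℝ)).const_mul (dilationWeight i)).exp.mul_const (p i))

theorem PX_dilation (s : ℝ) (p : Fin 6 → ℝ) : PX (dilation s p) = exp (-s) * PX p := by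
  show exp (-1 * s) * p 3 - 1/2 * (exp (1 * s) * p 1) * (exp (-2 * s) * p 5)
    = exp (-s) * (p 3 - 1/2 * p 1 * p 5)
  rw [neg_one_mul]
  have h : exp (1 * s) * exp (-2 * s) = exp (-s) := by rw [← exp_add]; ring_nf
  linear_combination (-(1/2) * p 1 * p 5) * h

theorem PY_dilation (s : ℝ) (p : Fin 6 → ℝ) : PY (dilation s p) = exp (-s) * PY p := by
  show exp (-1 * s) * p 4 + 1/2 * (exp (1 * s) * p 0) * (exp (-2 * s) * p 5)
    = exp (-s) * (p 4 + 1/2 * p 0 * p 5)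
  rw [neg_one_mul]
  have h : exp (1 * s) * exp (-2 * s) = exp (-s) := by rw [← exp_add]; ring_nf
  linear_combination (1/2 * p 0 * p 5) * h

theorem Qf_nonneg (p : Fin 6 → ℝ) : 0 ≤ Qf p := by
  unfold Qf; positivity

theorem Qf_dilation (s : ℝ) (p : Fin 6 → ℝ) : Qf (dilation s p) = exp (4 * s) * Qf p := by
  show ((exp (1 * s) * p 0) ^ 2 + (exp (1 * s) * p 1) ^ 2) ^ 2 + 16 * (exp (2 * s) * p 2) ^ 2
    = exp (4 * s) * (((p 0)^2 + (p 1)^2)^2 + 16 * (p 2)^2)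
  have h1 : exp (1 * s) ^ 4 = exp (4 * s) := by rw [← exp_nat_mul]; ring_nf
  have h2 : exp (2 * s) ^ 2 = exp (4 * s) := by rw [← exp_nat_mul]; ring_nf
  linear_combination ((p 0)^2 + (p 1)^2)^2 * h1 + 16 * (p 2)^2 * h2

theorem Ham_dilation (s : ℝ) (p : Fin 6 → ℝ) : Ham (dilation s p) = exp (-2 * s) * Ham p := by
  have hpot : Qf (dilation s p) ^ (-(1/2) : ℝ) = exp (-2 * s) * Qf p ^ (-(1/2) : ℝ) := by
    rw [Qf_dilation, mul_rpow (exp_pos _).le (Qf_nonneg p), ← exp_mul]; ring_nf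
  have hkin : exp (-s) ^ 2 = exp (-2 * s) := by rw [← exp_nat_mul]; ring_nf
  unfold Ham
  rw [PX_dilation, PY_dilation, hpot]
  linear_combination (1/2 * (PX p ^ 2 + PY p ^ 2)) * hkin

theorem Qf_ne_zero {p : Fin 6 → ℝ} (hp : ¬ (p 0 = 0 ∧ p 1 = 0 ∧ p 2 = 0)) : Qf p ≠ 0 := by
  contrapose! hp
  obtain ⟨hxy, hz⟩ := (add_eq_zero_iff_of_nonneg (by positivity) (by positivity)).1 hp
  obtain ⟨hx, hy⟩ := (add_eq_zero_iff_of_nonneg (sq_nonneg _) (sq_nonneg _)).1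
    ((pow_eq_zero_iff two_ne_zero).1 hxy)
  exact ⟨pow_eq_zero_iff two_ne_zero |>.1 hx, pow_eq_zero_iff two_ne_zero |>.1 hy,
    by simpa using hz⟩

theorem differentiableAt_Ham {p : Fin 6 → ℝ} (hp : Qf p ≠ 0) : DifferentiableAt ℝ Ham p := by
  unfold Ham PX PY Qf
  fun_prop (disch := exact hp)

theorem fderiv_Ham_dilationGenerator {p : Fin 6 → ℝ} (hp : Qf p ≠ 0) :
    fderiv ℝ Ham p (dilationGenerator p) = -2 * Ham p := by
  have h := fderiv_apply_eq_mul_of_exp_homogeneous (γ := fun s => dilation s p)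
    (by rw [dilation_zero]; exact differentiableAt_Ham hp) (hasDerivAt_dilation p)
    (fun s => by rw [Ham_dilation, dilation_zero])
  simpa only [dilation_zero] using h

theorem map_dilationGenerator (L : (Fin 6 → ℝ) →L[ℝ] ℝ) (p : Fin 6 → ℝ) :
    L (dilationGenerator p) = p 0 * L (Pi.single 0 1) + p 1 * L (Pi.single 1 1)
      + 2 * p 2 * L (Pi.single 2 1) - p 3 * L (Pi.single 3 1) - p 4 * L (Pi.single 4 1)
      - 2 * p 5 * L (Pi.single 5 1) := by
  have h : dilationGenerator p = p 0 • Pi.single 0 1 + p 1 • Pi.single 1 1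
      + (2 * p 2) • Pi.single 2 1 - p 3 • Pi.single 3 1 - p 4 • Pi.single 4 1
      - (2 * p 5) • Pi.single 5 1 := by
    ext i; fin_cases i <;> simp [dilationGenerator, dilationWeight]
  simp only [h, map_add, map_sub, map_smul, smul_eq_mul]

/-- Along any solution of the Kepler–Heisenberg system, the dilational momentum
`J = x p_x + y p_y + 2 z p_z` satisfies `dJ/dt = 2 H(c(t))` at every time. -/
theorem kh_dilational_momentum_derivative (c : ℝ → Fin 6 → ℝ) (I : Set ℝ)
    (hc : IsSolutionOn c I) :
    ∀ t ∈ I, HasDerivAt (fun τ => Jmom (c τ)) (2 * Ham (c t)) t := by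
  intro t ht
  obtain ⟨hpos, hx, hy, hz, hpx, hpy, hpz⟩ := hc.2.2 t ht
  have hEuler := fderiv_Ham_dilationGenerator (Qf_ne_zero hpos)
  rw [map_dilationGenerator] at hEuler
  have hJ : HasDerivAt (fun τ => Jmom (c τ)) _ t :=
    ((hx.mul hpx).add (hy.mul hpy)).add ((hz.const_mul 2).mul hpz)
  exact hJ.congr_deriv (by linear_combination -hEuler)
end

section
/- The set {z = 0, p_z = 0, x·p_y − y·p_x = 0} is invariant under the Kepler-Heisenberg flow: if c is a solution with z(t₀) = 0, p_z(t₀) = 0 and x(t₀)·p_y(t₀) − y(t₀)·p_x(t₀) = 0 at some time t₀, then z(t) = 0, p_z(t) = 0 and x(t)·p_y(t) − y(t)·p_x(t) = 0 for all t in the interval of definition. -/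
/-!
The angular momentum `L = x p_y - y p_x` is conserved, since the Hamiltonian is invariant under
rotations about the `z`-axis. Once `L = 0`, Hamilton's equations give `ż = (x² + y²) p_z / 4` and
`ṗ_z = -8 f z` with `f = Q^{-3/2} / (4π)`, a linear system with coefficients that are continuous
along the solution. Hence `z² + p_z²` has derivative bounded by a continuous multiple of itself,
and Grönwall's inequality keeps it at zero on the whole (connected) interval.
-/

open Set Real

section LinearGrowth

variable {E : Type*} [NormedAddCommGroup E] [NormedSpace ℝ E] {f f' : ℝ → E} {k : ℝ → ℝ}

theorem eq_zero_of_norm_deriv_le_mul_norm_of_eq_zero_left {a b : ℝ}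
    (hk : ContinuousOn k (Icc a b)) (hf : ∀ t ∈ Icc a b, HasDerivAt f (f' t) t)
    (bound : ∀ t ∈ Icc a b, ‖f' t‖ ≤ k t * ‖f t‖) (ha : f a = 0) :
    ∀ t ∈ Icc a b, f t = 0 := by
  obtain ⟨K, hK⟩ := isCompact_Icc.exists_bound_of_continuousOn hk
  refine eq_zero_of_abs_deriv_le_mul_abs_self_of_eq_zero_right
    (fun t ht => (hf t ht).continuousAt.continuousWithinAt)
    (fun t ht => (hf t (Ico_subset_Icc_self ht)).hasDerivWithinAt) ha (K := K) fun t ht => ?_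
  have ht := Ico_subset_Icc_self ht
  calc ‖f' t‖ ≤ k t * ‖f t‖ := bound t ht
    _ ≤ K * ‖f t‖ := by
      gcongr
      exact (le_abs_self _).trans (hK t ht)

theorem eq_zero_of_norm_deriv_le_mul_norm_of_eq_zero_right {a b : ℝ}
    (hk : ContinuousOn k (Icc a b)) (hf : ∀ t ∈ Icc a b, HasDerivAt f (f' t) t)
    (bound : ∀ t ∈ Icc a b, ‖f' t‖ ≤ k t * ‖f t‖) (hb : f b = 0) :
    ∀ t ∈ Icc a b, f t = 0 := by
  have hneg : MapsTo Neg.neg (Icc (-b) (-a)) (Icc a b) := fun t ht =>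
    ⟨le_neg_of_le_neg ht.2, neg_le_of_neg_le ht.1⟩
  have hreflected := eq_zero_of_norm_deriv_le_mul_norm_of_eq_zero_left (f := fun t => f (-t))
    (f' := fun t => -f' (-t)) (k := fun t => k (-t)) (hk.comp continuousOn_neg hneg)
    (fun t ht => by
      simpa [Function.comp_def] using (hf _ (hneg ht)).scomp t (hasDerivAt_neg t))
    (fun t ht => by simpa using bound _ (hneg ht)) (by simpa using hb)
  intro t ht
  simpa using hreflected (-t) ⟨neg_le_neg ht.2, neg_le_neg ht.1⟩

theorem IsPreconnected.eq_zero_of_norm_deriv_le_mul_norm {I : Set ℝ} {t₀ : ℝ}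
    (hI : IsPreconnected I) (hk : ContinuousOn k I) (hf : ∀ t ∈ I, HasDerivAt f (f' t) t)
    (bound : ∀ t ∈ I, ‖f' t‖ ≤ k t * ‖f t‖) (ht₀ : t₀ ∈ I) (h₀ : f t₀ = 0) :
    ∀ t ∈ I, f t = 0 := by
  intro t ht
  rcases le_total t₀ t with h | h
  · have hsub := hI.Icc_subset ht₀ ht
    exact eq_zero_of_norm_deriv_le_mul_norm_of_eq_zero_left (hk.mono hsub)
      (fun s hs => hf s (hsub hs)) (fun s hs => bound s (hsub hs)) h₀ t ⟨h, le_rfl⟩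
  · have hsub := hI.Icc_subset ht ht₀
    exact eq_zero_of_norm_deriv_le_mul_norm_of_eq_zero_right (hk.mono hsub)
      (fun s hs => hf s (hsub hs)) (fun s hs => bound s (hsub hs)) h₀ t ⟨le_rfl, h⟩

end LinearGrowth

theorem abs_two_mul_mul_mul_le (a x y : ℝ) : |2 * a * x * y| ≤ |a| * (x ^ 2 + y ^ 2) := by
  have hxy : 2 * |x| * |y| ≤ x ^ 2 + y ^ 2 := by
    simpa only [sq_abs] using two_mul_le_add_sq |x| |y|
  rw [abs_mul, abs_mul, abs_mul, abs_two]
  nlinarith [mul_le_mul_of_nonneg_left hxy (abs_nonneg a)]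

theorem Qf_pos (p : Fin 6 → ℝ) (h : ¬ (p 0 = 0 ∧ p 1 = 0 ∧ p 2 = 0)) : 0 < Qf p := by
  unfold Qf
  rcases (by tauto : p 0 ≠ 0 ∨ p 1 ≠ 0 ∨ p 2 ≠ 0) with h | h | h <;> positivity

/-- The gradient of the potential term of `Ham` is `forceCoeff p • (r² x, r² y, 8 z)`,
`r² = x² + y²`. -/
noncomputable def forceCoeff (p : Fin 6 → ℝ) : ℝ := Qf p ^ (-(3/2) : ℝ) / (4 * π)

noncomputable def angularMomentum (p : Fin 6 → ℝ) : ℝ := p 0 * p 4 - p 1 * p 3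

theorem continuousAt_forceCoeff {p : Fin 6 → ℝ} (hp : Qf p ≠ 0) : ContinuousAt forceCoeff p :=
  ((by unfold Qf; fun_prop : ContinuousAt Qf p).rpow_const (Or.inl hp)).div_const _

theorem fderiv_Ham_apply {p : Fin 6 → ℝ} (hp : Qf p ≠ 0) (v : Fin 6 → ℝ) :
    fderiv ℝ Ham p v =
      PX p * (v 3 - (v 1 * p 5 + p 1 * v 5) / 2) + PY p * (v 4 + (v 0 * p 5 + p 0 * v 5) / 2)
        + forceCoeff p * ((p 0 ^ 2 + p 1 ^ 2) * (p 0 * v 0 + p 1 * v 1) + 8 * p 2 * v 2) := by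
  have h (i : Fin 6) := hasFDerivAt_apply (𝕜 := ℝ) i p
  have hPX := (h 3).sub (((h 1).const_mul (1/2 : ℝ)).mul (h 5))
  have hPY := (h 4).add (((h 0).const_mul (1/2 : ℝ)).mul (h 5))
  have hQ := (((h 0).pow 2).add ((h 1).pow 2)).pow 2 |>.add (((h 2).pow 2).const_mul 16)
  have hV := (hasDerivAt_rpow_const (p := (-(1/2) : ℝ)) (Or.inl hp)).comp_hasFDerivAt p hQ
  have hH : HasFDerivAt Ham _ p :=
    (((hPX.pow 2).add (hPY.pow 2)).const_mul (1/2 : ℝ)).sub (hV.const_mul (1/(8*π)))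
  rw [hH.fderiv, show (-(1/2) - 1 : ℝ) = -(3/2) by norm_num]
  simp only [Pi.sub_apply, Pi.mul_apply, Pi.add_apply, sub_apply, add_apply, smul_apply,
    ContinuousLinearMap.proj_apply, nsmul_eq_mul, smul_eq_mul]
  unfold PX PY forceCoeff
  ring
namespace IsSolutionOn

variable {c : ℝ → Fin 6 → ℝ} {I : Set ℝ} {t t₀ : ℝ}

theorem Qf_ne_zero (hc : IsSolutionOn c I) (ht : t ∈ I) : Qf (c t) ≠ 0 :=
  (Qf_pos _ (hc.2.2 t ht).1).ne'

theorem hasDerivAt_coords (hc : IsSolutionOn c I) (ht : t ∈ I) :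
    HasDerivAt (fun τ => c τ 0) (PX (c t)) t ∧
    HasDerivAt (fun τ => c τ 1) (PY (c t)) t ∧
    HasDerivAt (fun τ => c τ 2) ((c t 0 * PY (c t) - c t 1 * PX (c t)) / 2) t ∧
    HasDerivAt (fun τ => c τ 3)
      (-(PY (c t) * c t 5 / 2 + forceCoeff (c t) * (c t 0 ^ 2 + c t 1 ^ 2) * c t 0)) t ∧
    HasDerivAt (fun τ => c τ 4)
      (PX (c t) * c t 5 / 2 - forceCoeff (c t) * (c t 0 ^ 2 + c t 1 ^ 2) * c t 1) t ∧
    HasDerivAt (fun τ => c τ 5) (-(8 * forceCoeff (c t) * c t 2)) t := by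
  obtain ⟨-, hx, hy, hz, hpx, hpy, hpz⟩ := hc.2.2 t ht
  simp only [fderiv_Ham_apply (hc.Qf_ne_zero ht), Pi.single_apply, Fin.reduceEq, if_true,
    if_false] at hx hy hz hpx hpy hpz
  exact ⟨hx.congr_deriv (by ring), hy.congr_deriv (by ring), hz.congr_deriv (by ring),
    hpx.congr_deriv (by ring), hpy.congr_deriv (by ring), hpz.congr_deriv (by ring)⟩

theorem continuousOn (hc : IsSolutionOn c I) : ContinuousOn c I := fun t ht => by
  obtain ⟨hx, hy, hz, hpx, hpy, hpz⟩ := hc.hasDerivAt_coords ht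
  refine (continuousAt_pi.2 fun i => ?_).continuousWithinAt
  fin_cases i
  exacts [hx.continuousAt, hy.continuousAt, hz.continuousAt, hpx.continuousAt, hpy.continuousAt,
    hpz.continuousAt]

theorem hasDerivAt_angularMomentum (hc : IsSolutionOn c I) (ht : t ∈ I) :
    HasDerivAt (fun τ => angularMomentum (c τ)) 0 t := by
  obtain ⟨hx, hy, -, hpx, hpy, -⟩ := hc.hasDerivAt_coords ht
  refine ((hx.mul hpy).sub (hy.mul hpx)).congr_deriv ?_
  unfold PX PY
  ring

theorem angularMomentum_eq (hc : IsSolutionOn c I) (ht₀ : t₀ ∈ I) (ht : t ∈ I) :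
    angularMomentum (c t) = angularMomentum (c t₀) :=
  hc.1.is_const_of_deriv_eq_zero hc.2.1
    (fun _ hs => (hc.hasDerivAt_angularMomentum hs).differentiableAt.differentiableWithinAt)
    (fun _ hs => (hc.hasDerivAt_angularMomentum hs).deriv) ht ht₀

theorem hasDerivAt_sq_add_sq (hc : IsSolutionOn c I) (ht : t ∈ I)
    (hL : angularMomentum (c t) = 0) :
    HasDerivAt (fun τ => c τ 2 ^ 2 + c τ 5 ^ 2)
      (2 * ((c t 0 ^ 2 + c t 1 ^ 2) / 4 - 8 * forceCoeff (c t)) * c t 2 * c t 5) t := by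
  obtain ⟨-, -, hz, -, -, hpz⟩ := hc.hasDerivAt_coords ht
  refine ((hz.pow 2).add (hpz.pow 2)).congr_deriv ?_
  unfold angularMomentum at hL
  unfold PX PY
  linear_combination c t 2 * hL

theorem z_eq_zero_and_pz_eq_zero (hc : IsSolutionOn c I) (ht₀ : t₀ ∈ I)
    (hL : ∀ t ∈ I, angularMomentum (c t) = 0) (hz : c t₀ 2 = 0) (hpz : c t₀ 5 = 0)
    (ht : t ∈ I) : c t 2 = 0 ∧ c t 5 = 0 := by
  set k : ℝ → ℝ := fun t => |(c t 0 ^ 2 + c t 1 ^ 2) / 4 - 8 * forceCoeff (c t)|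
  have hk : ContinuousOn k I := by
    have hf : ContinuousOn (fun t => forceCoeff (c t)) I := fun t ht =>
      (continuousAt_forceCoeff (hc.Qf_ne_zero ht)).comp_continuousWithinAt (hc.continuousOn t ht)
    have hcoord (i : Fin 6) : ContinuousOn (fun t => c t i) I :=
      (continuous_apply i).comp_continuousOn hc.continuousOn
    fun_prop
  have bound (t : ℝ) (_ : t ∈ I) :
      ‖2 * ((c t 0 ^ 2 + c t 1 ^ 2) / 4 - 8 * forceCoeff (c t)) * c t 2 * c t 5‖ ≤
        k t * ‖c t 2 ^ 2 + c t 5 ^ 2‖ := by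
    rw [Real.norm_eq_abs, Real.norm_of_nonneg (by positivity)]
    exact abs_two_mul_mul_mul_le _ _ _
  have hsq := hc.2.1.eq_zero_of_norm_deriv_le_mul_norm hk
    (fun t ht => hc.hasDerivAt_sq_add_sq ht (hL t ht)) bound ht₀ (by simp [hz, hpz]) t ht
  obtain ⟨hz2, hpz2⟩ := (add_eq_zero_iff_of_nonneg (sq_nonneg _) (sq_nonneg _)).1 hsq
  exact ⟨pow_eq_zero_iff two_ne_zero |>.1 hz2, pow_eq_zero_iff two_ne_zero |>.1 hpz2⟩

end IsSolutionOn

/-- The set `{z = 0, p_z = 0, x p_y - y p_x = 0}` is invariant under the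
Kepler–Heisenberg flow. -/
theorem kh_invariant_submanifold (c : ℝ → Fin 6 → ℝ) (I : Set ℝ)
    (hc : IsSolutionOn c I) (t₀ : ℝ) (ht₀ : t₀ ∈ I)
    (hz : c t₀ 2 = 0) (hpz : c t₀ 5 = 0)
    (hang : c t₀ 0 * c t₀ 4 - c t₀ 1 * c t₀ 3 = 0) :
    ∀ t ∈ I, c t 2 = 0 ∧ c t 5 = 0 ∧ c t 0 * c t 4 - c t 1 * c t 3 = 0 := by
  have hL (t : ℝ) (ht : t ∈ I) : angularMomentum (c t) = 0 :=
    (hc.angularMomentum_eq ht₀ ht).trans hang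
  intro t ht
  obtain ⟨hzt, hpzt⟩ := hc.z_eq_zero_and_pz_eq_zero ht₀ hL hz hpz ht
  exact ⟨hzt, hpzt, hL t ht⟩
end
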